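/- arXiv:1908.08214 — 5 statements merged into one kernel-verified Lean document; each statement's English description precedes it below -/
import Mathlib

section
/- Let F be a finitely generated free group, φ : F → F an injective endomorphism, H' ≤ F a finite-index subgroup, and suppose j > k ≥ 0 satisfy φ^{-k}(H') = φ^{-j}(H'). Set K = φ^{-k}(H'). Then φ^{j-k}(K) ≤ K, and the induced map on left cosets φ̄ : F/K → F/K sending gK to φ^{j-k}(g)K is a well-defined bijection of the finite set F/K. -/
/-!
Put `ψ = φ ^ (j - k)`. Since `φ ^ j = φ ^ k ∘ ψ`, the hypothesis says `ψ⁻¹(K) = K`. Hence `ψ(K) ≤ K`,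
and `ψ(a)⁻¹ ψ(b) ∈ K ↔ a⁻¹ b ∈ K`, so `ψ` induces a well-defined injective self-map of `G ⧸ K`,
which is finite because `K`, a preimage of a finite-index subgroup, has finite index.
-/

namespace Subgroup

variable {G G' : Type*} [Group G] [Group G']

instance finiteIndex_comap (H : Subgroup G) [H.FiniteIndex] (f : G' →* G) :
    (H.comap f).FiniteIndex :=
  ⟨by rw [index_comap]; exact FiniteIndex.index_ne_zero (H := H.subgroupOf f.range)⟩

section QuotientMap

variable {K : Subgroup G} {L : Subgroup G'}

def quotientMapOfLEComap (f : G →* G') (h : K ≤ L.comap f) : G ⧸ K → G' ⧸ L :=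
  Quotient.map' f fun a b hab => by
    rw [QuotientGroup.leftRel_apply] at hab ⊢
    simpa using h hab

@[simp]
theorem quotientMapOfLEComap_apply_mk (f : G →* G') (h : K ≤ L.comap f) (g : G) :
    quotientMapOfLEComap f h (g : G ⧸ K) = (f g : G' ⧸ L) :=
  rfl

theorem quotientMapOfLEComap_injective (f : G →* G') (h : K ≤ L.comap f) (h' : L.comap f ≤ K) :
    Function.Injective (quotientMapOfLEComap f h) := by
  refine Quotient.ind₂' fun a b hab => ?_
  simp only [quotientMapOfLEComap_apply_mk, QuotientGroup.eq] at hab ⊢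
  exact h' (by simpa using hab)

end QuotientMap

theorem comap_comap_eq_of_comap_comp_eq (H : Subgroup G') (f : G →* G') (g : G →* G)
    (h : H.comap (f.comp g) = H.comap f) : (H.comap f).comap g = H.comap f := by
  rw [comap_comap, h]

end Subgroup

theorem stmt_2_general {G : Type*} [Group G]
    (φ : Monoid.End G)
    (H' : Subgroup G) (hH' : H'.FiniteIndex) (k j : ℕ) (hkj : k < j)
    (heq : H'.comap (φ ^ k : Monoid.End G) = H'.comap (φ ^ j : Monoid.End G))
    (K : Subgroup G) (hK : K = H'.comap (φ ^ k : Monoid.End G)) :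
    Subgroup.map (φ ^ (j - k) : Monoid.End G) K ≤ K ∧
    Finite (G ⧸ K) ∧
    ∃ e : G ⧸ K → G ⧸ K, Function.Bijective e ∧
      ∀ g : G, e (QuotientGroup.mk g) = QuotientGroup.mk ((φ ^ (j - k) : Monoid.End G) g) := by
  subst hK
  have hpow : (φ ^ k : Monoid.End G) * φ ^ (j - k) = φ ^ j := by
    rw [← pow_add, Nat.add_sub_cancel' hkj.le]
  have hinv := Subgroup.comap_comap_eq_of_comap_comp_eq H' (φ ^ k) (φ ^ (j - k))
    (by rw [heq, ← hpow]; rfl)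
  refine ⟨Subgroup.map_le_iff_le_comap.2 hinv.ge, inferInstance,
    Subgroup.quotientMapOfLEComap _ hinv.ge, ?_, fun _ => rfl⟩
  exact Finite.injective_iff_bijective.1
    (Subgroup.quotientMapOfLEComap_injective _ hinv.ge hinv.le)

/-- With `K = φ^{-k}(H')` and `φ^{-k}(H') = φ^{-j}(H')`, `φ^{j-k}(K) ≤ K` and the induced
map on left cosets `F/K` is a well-defined bijection of a finite set. -/
theorem stmt_2 {G : Type*} [Group G] [IsFreeGroup G] [Group.FG G]
    (φ : Monoid.End G) (hφ : Function.Injective φ)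
    (H' : Subgroup G) (hH' : H'.FiniteIndex) (k j : ℕ) (hkj : k < j)
    (heq : H'.comap (φ ^ k : Monoid.End G) = H'.comap (φ ^ j : Monoid.End G))
    (K : Subgroup G) (hK : K = H'.comap (φ ^ k : Monoid.End G)) :
    Subgroup.map (φ ^ (j - k) : Monoid.End G) K ≤ K ∧
    Finite (G ⧸ K) ∧
    ∃ e : G ⧸ K → G ⧸ K, Function.Bijective e ∧
      ∀ g : G, e (QuotientGroup.mk g) = QuotientGroup.mk ((φ ^ (j - k) : Monoid.End G) g) :=
  stmt_2_general φ H' hH' k j hkj heq K hK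
end

section
/- Let F be a finitely generated free group (more generally, any group in which finitely generated subgroups are separable). If H ≤ F is a finitely generated subgroup and g ∈ F satisfies g H g^{-1} ≤ H, with g H g^{-1} a proper subgroup of H, then a contradiction arises; i.e., a finitely generated subgroup of a free group cannot be conjugate (within the ambient group) to a proper subgroup of itself: if g H g^{-1} ≤ H then g H g^{-1} = H. -/
/-!
A free group acts on any finite set `V` of cosets of `H`: extend, for each generator, the partial
map it induces on `V` to a permutation of `V`. If `V` contains every coset visited while reading
words for the generators of `H` and for some `y ∉ H`, the action agrees with the true one along
these words, so the stabilizer of the base coset is a finite-index subgroup containing `H` but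
not `y` (Hall).

Given this separability, suppose `gHg⁻¹ < H`, take `x ∈ H \ gHg⁻¹` and a finite-index
`K ⊇ H` avoiding `g⁻¹xg`. Then `M = core K ⊔ H` has finite index and `gMg⁻¹ ≤ M`;
conjugation preserves the index, so `gMg⁻¹ = M`, whence `g⁻¹xg ∈ M ≤ K`.
-/

open Subgroup

section PartialAction

variable {G X : Type*} [Group G] [MulAction G X] {V : Set X}

def AgreesWithSMul (φ : G →* Equiv.Perm V) (a : G) : Prop :=
  ∀ v : V, a • (v : X) ∈ V → (φ a v : X) = a • (v : X)

theorem AgreesWithSMul.inv {φ : G →* Equiv.Perm V} {a : G} (h : AgreesWithSMul φ a) :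
    AgreesWithSMul φ a⁻¹ := by
  intro v hv
  have hw : φ a ⟨a⁻¹ • (v : X), hv⟩ = v := Subtype.ext <| by simpa using h ⟨_, hv⟩ (by simp)
  rw [map_inv, Equiv.Perm.inv_def, (φ a).symm_apply_eq.mpr hw.symm]

theorem AgreesWithSMul.list_prod_apply {φ : G →* Equiv.Perm V} {L : List G}
    (hL : ∀ a ∈ L, AgreesWithSMul φ a) (v : V)
    (hV : ∀ L' : List G, L' <:+ L → L'.prod • (v : X) ∈ V) :
    (φ L.prod v : X) = L.prod • (v : X) := by
  induction L with
  | nil => simp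
  | cons a L ih =>
    have hw : (φ L.prod v : X) = L.prod • (v : X) :=
      ih (fun b hb => hL b (List.mem_cons_of_mem a hb))
        fun L' hL' => hV L' (hL'.trans (List.suffix_cons a L))
    have haV : a • (φ L.prod v : X) ∈ V := by
      simpa [hw, mul_smul] using hV (a :: L) List.suffix_rfl
    rw [List.prod_cons, map_mul, Equiv.Perm.mul_apply, hL a List.mem_cons_self _ haV, hw,
      mul_smul]

theorem exists_perm_agreesWithSMul (a : G) (V : Set X) [Finite V] :
    ∃ π : Equiv.Perm V, ∀ v : V, a • (v : X) ∈ V → (π v : X) = a • (v : X) := by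
  classical
  let f : {v : V // a • (v : X) ∈ V} → V := fun v => ⟨a • (v : X), v.2⟩
  have hf : Function.Injective f := fun v w hvw =>
    Subtype.ext <| Subtype.ext <| smul_left_cancel a (congrArg Subtype.val hvw)
  refine ⟨(Equiv.ofInjective f hf).extendSubtype, fun v hv => ?_⟩
  rw [Equiv.extendSubtype_apply_of_mem (Equiv.ofInjective f hf) v hv, Equiv.ofInjective_apply]

end PartialAction

namespace IsFreeGroup

variable {G : Type*} [Group G] [IsFreeGroup G]

theorem closure_range_of : Subgroup.closure (Set.range (of : Generators G → G)) = ⊤ := by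
  let f : G →* Subgroup.closure (Set.range (of : Generators G → G)) :=
    lift fun s => ⟨of s, subset_closure (Set.mem_range_self s)⟩
  have hf : (Subgroup.closure _).subtype.comp f = MonoidHom.id G := ext_hom fun s => by simp [f]
  exact eq_top_iff.mpr fun g _ => by
    rw [← MonoidHom.id_apply G g, ← hf]
    exact (f g).2

theorem exists_list_prod_eq (g : G) :
    ∃ L : List G, (∀ a ∈ L, a ∈ Set.range of ∪ (Set.range of)⁻¹) ∧ L.prod = g :=
  Submonoid.exists_list_of_mem_closure <| by
    rw [← Subgroup.closure_toSubmonoid, closure_range_of]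
    trivial

theorem exists_hom_agreesWithSMul {X : Type*} [MulAction G X] (V : Set X) [Finite V] :
    ∃ φ : G →* Equiv.Perm V, ∀ a ∈ Set.range of ∪ (Set.range of)⁻¹, AgreesWithSMul φ a := by
  choose π hπ using fun s : Generators G => exists_perm_agreesWithSMul (of s) V
  have hof : ∀ s, AgreesWithSMul (lift π) (of s) := fun s v hv => by
    rw [lift_of]
    exact hπ s v hv
  refine ⟨lift π, ?_⟩
  rintro a (⟨s, rfl⟩ | ⟨s, hs⟩)
  · exact hof s
  · rw [← inv_inv a, ← hs]
    exact (hof s).inv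

end IsFreeGroup

/-- `H` is closed in the profinite topology of `G`. -/
def Subgroup.IsSeparable {G : Type*} [Group G] (H : Subgroup G) : Prop :=
  ∀ y ∉ H, ∃ K : Subgroup G, K.FiniteIndex ∧ H ≤ K ∧ y ∉ K

/-- Hall's theorem. -/
theorem IsFreeGroup.isSeparable_of_fg {G : Type*} [Group G] [IsFreeGroup G] {H : Subgroup G}
    (hH : H.FG) : H.IsSeparable := by
  obtain ⟨T, rfl⟩ := hH
  intro y hy
  choose w hw hwprod using exists_list_prod_eq (G := G)
  let x₀ : G ⧸ closure (T : Set G) := (1 : G)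
  let V : Set (G ⧸ closure (T : Set G)) :=
    ⋃ t ∈ insert y (T : Set G), (fun L : List G => L.prod • x₀) '' {L | L ∈ (w t).tails}
  have hV : V.Finite :=
    (T.finite_toSet.insert y).biUnion fun t _ => (w t).tails.finite_toSet.image _
  have memV : ∀ t ∈ insert y (T : Set G), ∀ L, L <:+ w t → L.prod • x₀ ∈ V := fun t ht L hL =>
    Set.mem_biUnion ht (Set.mem_image_of_mem _ ((List.mem_tails _ _).mpr hL))
  have hx₀ : x₀ ∈ V := by simpa using memV y (Set.mem_insert y _) [] List.nil_suffix
  have : Finite V := hV.to_subtype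
  obtain ⟨φ, hφ⟩ := exists_hom_agreesWithSMul (G := G) V
  let K := (MulAction.stabilizer (Equiv.Perm V) (⟨x₀, hx₀⟩ : V)).comap φ
  have hK : ∀ t ∈ insert y (T : Set G), t ∈ K ↔ t ∈ closure (T : Set G) := by
    intro t ht
    have hread : (φ t ⟨x₀, hx₀⟩ : G ⧸ closure (T : Set G)) = t • x₀ := by
      rw [← hwprod t]
      exact AgreesWithSMul.list_prod_apply (fun a ha => hφ a (hw t a ha)) _ (memV t ht)
    rw [mem_comap, MulAction.mem_stabilizer_iff, Equiv.Perm.smul_def, Subtype.ext_iff, hread,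
      ← MulAction.mem_stabilizer_iff, MulAction.stabilizer_quotient]
  refine ⟨K, finiteIndex_of_le (φ.ker_le_comap _), ?_, fun hyK => ?_⟩
  · exact (closure_le K).mpr fun t ht => (hK t (Set.mem_insert_of_mem y ht)).mpr (subset_closure ht)
  · exact hy ((hK y (Set.mem_insert y _)).mp hyK)

theorem Subgroup.map_eq_of_map_le_of_finiteIndex {G : Type*} [Group G] (e : G ≃* G)
    {M : Subgroup G} [M.FiniteIndex] (h : M.map e.toMonoidHom ≤ M) : M.map e.toMonoidHom = M := by
  have hindex : (M.map e.toMonoidHom).index = M.index := M.index_map_equiv e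
  have : (M.map e.toMonoidHom).FiniteIndex := ⟨hindex ▸ FiniteIndex.index_ne_zero⟩
  by_contra hne
  exact (index_strictAnti (lt_of_le_of_ne h hne)).ne' hindex

theorem Subgroup.IsSeparable.map_conj_eq_of_le {G : Type*} [Group G] {H : Subgroup G}
    (hH : H.IsSeparable) {g : G} (h : H.map (MulAut.conj g).toMonoidHom ≤ H) :
    H.map (MulAut.conj g).toMonoidHom = H := by
  refine le_antisymm h fun x hx => by_contra fun hx' => ?_
  have hy : g⁻¹ * x * g ∉ H := fun hy => hx' ⟨_, hy, by simp [mul_assoc]⟩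
  obtain ⟨K, hK, hHK, hyK⟩ := hH _ hy
  let M := K.normalCore ⊔ H
  have : M.FiniteIndex := finiteIndex_of_le le_sup_left
  have hM : M.map (MulAut.conj g).toMonoidHom = M := by
    refine map_eq_of_map_le_of_finiteIndex _ ?_
    rw [map_sup]
    exact sup_le_sup (Normal.map_conj_eq K.normalCore g).le h
  obtain ⟨m, hm, rfl⟩ : x ∈ M.map (MulAut.conj g).toMonoidHom := by
    rw [hM]
    exact (le_sup_right : H ≤ M) hx
  exact hyK (sup_le K.normalCore_le hHK (by simpa [mul_assoc] using hm))

theorem stmt_3_general {G : Type*} [Group G] [IsFreeGroup G]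
    (H : Subgroup G) (hH : H.FG) (g : G)
    (h : Subgroup.map (MulAut.conj g).toMonoidHom H ≤ H) :
    Subgroup.map (MulAut.conj g).toMonoidHom H = H :=
  (IsFreeGroup.isSeparable_of_fg hH).map_conj_eq_of_le h

/-- A finitely generated subgroup of a finitely generated free group cannot be conjugate
(within the ambient group) to a proper subgroup of itself: if `g H g⁻¹ ≤ H` then
`g H g⁻¹ = H`. -/
theorem stmt_3 {G : Type*} [Group G] [IsFreeGroup G] [Group.FG G]
    (H : Subgroup G) (hH : H.FG) (g : G)
    (h : Subgroup.map (MulAut.conj g).toMonoidHom H ≤ H) :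
    Subgroup.map (MulAut.conj g).toMonoidHom H = H :=
  stmt_3_general H hH g h
end

section
/- Let F be a finitely generated free group and φ : F → F an injective nonsurjective endomorphism. Then there is no g ∈ F and i < j with g φ^i(F) g^{-1} = φ^j(F); i.e., no image subgroup φ^i(F) is conjugate in F to a later image φ^j(F). -/
/-!
Conjugation by `g` maps `H = φ^i(F)` onto `φ^j(F)`, which is a proper subgroup of `H` because `φ`
is injective but not surjective. Hence conjugating by `g⁻¹` over and over produces a strictly
increasing chain `H < g⁻¹Hg < g⁻²Hg² < ⋯` of subgroups of rank at most `rank F`. No free group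
contains such a chain: its union `U` is free by Nielsen–Schreier. If `U` has finite rank it is
finitely generated, so the chain stabilises. Otherwise some member contains `rank F + 1` free
generators of `U`, and mapping `U` to `ℚ^(rank F + 1)` by sending those generators to a basis
shows that this member needs more than `rank F` generators.
-/

open Subgroup

theorem LinearIndependent.card_le_card_of_mem_addSubgroupClosure {V ι : Type*} [AddCommGroup V]
    [Module ℚ V] [Fintype ι] {v : ι → V} (hv : LinearIndependent ℚ v) (T : Finset V)
    (h : ∀ i, v i ∈ AddSubgroup.closure (T : Set V)) : Fintype.card ι ≤ T.card := by
  have hspan : Set.range v ≤ Submodule.span ℚ (T : Set V) := Set.range_subset_iff.2 fun i =>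
    (AddSubgroup.closure_le (Submodule.span ℚ (T : Set V)).toAddSubgroup).2
      Submodule.subset_span (h i)
  simpa using linearIndependent_le_span_aux' v hv T hspan

theorem Subgroup.FG.exists_le_of_le_iSup {G ι : Type*} [Group G] [Nonempty ι]
    {S : ι → Subgroup G} (hS : Directed (· ≤ ·) S) {K : Subgroup G} (hK : K.FG)
    (hle : K ≤ ⨆ i, S i) :
    ∃ i, K ≤ S i := by
  classical
  obtain ⟨T, rfl⟩ := hK
  have hmem : ∀ t ∈ T, ∃ i, t ∈ S i := fun t ht =>
    (mem_iSup_of_directed hS).1 (hle (subset_closure ht))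
  choose n hn using hmem
  obtain ⟨z, hz⟩ := hS.finset_le (T.attach.image fun t : {x // x ∈ T} => n t.1 t.2)
  exact ⟨z, (closure_le _).2 fun t ht =>
    hz _ (Finset.mem_image_of_mem _ (Finset.mem_attach _ ⟨t, ht⟩)) (hn t ht)⟩

theorem IsFreeGroup.card_le_rank_of_forall_of_mem_range {F H κ : Type*} [Group F]
    [IsFreeGroup F] [Group H] [Group.FG H] [Fintype κ] (f : H →* F)
    (e : κ ↪ IsFreeGroup.Generators F)
    (h : ∀ k, IsFreeGroup.of (e k) ∈ f.range) : Fintype.card κ ≤ Group.rank H := by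
  classical
  let v := Pi.basisFun ℚ κ
  let ρ : F →* Multiplicative (κ → ℚ) :=
    IsFreeGroup.lift fun x => .ofAdd (Function.extend e v 0 x)
  have hρ : ∀ k, ρ (IsFreeGroup.of (e k)) = .ofAdd (v k) := fun k => by
    simp only [ρ, IsFreeGroup.lift_of, e.injective.extend_apply]
  obtain ⟨T, hcard, hT⟩ := Group.rank_spec H
  let Y := T.image fun t => (ρ (f t)).toAdd
  have hY : ∀ y : H, (ρ (f y)).toAdd ∈ AddSubgroup.closure (Y : Set (κ → ℚ)) := by
    have : closure (T : Set H) ≤ (AddSubgroup.closure (Y : Set (κ → ℚ))).toSubgroup'.comap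
        (ρ.comp f) :=
      (closure_le _).2 fun t ht => AddSubgroup.subset_closure (Finset.mem_image_of_mem _ ht)
    exact fun y => this (hT ▸ mem_top y)
  calc Fintype.card κ ≤ Y.card :=
        v.linearIndependent.card_le_card_of_mem_addSubgroupClosure Y fun k => by
          obtain ⟨y, hy⟩ := h k
          simpa [hy, hρ] using hY y
    _ ≤ T.card := Finset.card_image_le
    _ = Group.rank H := hcard

theorem IsFreeGroup.not_strictMono_of_rank_le {G : Type*} [Group G] [IsFreeGroup G]
    {S : ℕ → Subgroup G} [∀ n, Group.FG (S n)] {r : ℕ} (hr : ∀ n, Group.rank (S n) ≤ r) :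
    ¬ StrictMono S := by
  intro hS
  set U := ⨆ n, S n
  have hSU : ∀ n, S n ≤ U := le_iSup S
  have hdir : Directed (· ≤ ·) S := hS.monotone.directed_le
  rcases finite_or_infinite (IsFreeGroup.Generators U) with _ | _
  · have : Group.FG U := Group.fg_of_surjective (f := (IsFreeGroup.toFreeGroup U).symm.toMonoidHom)
      (IsFreeGroup.toFreeGroup U).symm.surjective
    obtain ⟨N, hN⟩ := ((Group.fg_iff_subgroup_fg U).1 this).exists_le_of_le_iSup hdir le_rfl
    exact (hS (Nat.lt_succ_self N)).not_ge ((hSU (N + 1)).trans hN)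
  · let e : Fin (r + 1) ↪ IsFreeGroup.Generators U :=
      Fin.valEmbedding.trans (Infinite.natEmbedding _)
    let x : Fin (r + 1) → G := fun k => (IsFreeGroup.of (e k) : U)
    obtain ⟨N, hN⟩ := ((Subgroup.fg_iff _).2 ⟨_, rfl, Set.finite_range x⟩).exists_le_of_le_iSup
      hdir ((closure_le _).2 (Set.range_subset_iff.2 fun k => (IsFreeGroup.of (e k)).2))
    have hmem : ∀ k, IsFreeGroup.of (e k) ∈ (inclusion (hSU N)).range := fun k =>
      ⟨⟨x k, hN (subset_closure (Set.mem_range_self k))⟩, rfl⟩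
    have hcard := (IsFreeGroup.card_le_rank_of_forall_of_mem_range _ e hmem).trans (hr N)
    simp at hcard

theorem Monoid.End.strictAnti_map_pow_top {G : Type*} [Group G] (φ : Monoid.End G)
    (hinj : Function.Injective φ) (hsurj : ¬ Function.Surjective φ) :
    StrictAnti fun n : ℕ => Subgroup.map (φ ^ n : Monoid.End G) ⊤ := by
  refine strictAnti_nat_of_succ_lt fun n => ?_
  have hφ : Subgroup.map (φ : G →* G) ⊤ < ⊤ := lt_top_iff_ne_top.2 fun h =>
    hsurj (MonoidHom.range_eq_top.1 ((MonoidHom.range_eq_map _).trans h))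
  have hinj_n : Function.Injective (φ ^ n : Monoid.End G) := by
    rw [Monoid.End.coe_pow]
    exact hinj.iterate n
  have hsplit : Subgroup.map (φ ^ (n + 1) : Monoid.End G) ⊤ =
      Subgroup.map (φ ^ n : Monoid.End G) (Subgroup.map (φ : G →* G) ⊤) := by
    rw [pow_succ]
    exact (map_map _ _ _).symm
  rw [hsplit]
  exact (map_lt_map_iff_of_injective hinj_n).2 hφ

theorem Subgroup.strictMono_map_pow {G : Type*} [Group G] (e : MulAut G) {H : Subgroup G}
    (h : H < H.map e.toMonoidHom) : StrictMono fun n : ℕ => H.map (e ^ n).toMonoidHom := by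
  refine strictMono_nat_of_lt_succ fun n => ?_
  have hsplit :
      H.map (e ^ (n + 1)).toMonoidHom = (H.map e.toMonoidHom).map (e ^ n).toMonoidHom := by
    rw [pow_succ, map_map]
    rfl
  rw [hsplit]
  exact (map_lt_map_iff_of_injective (e ^ n).injective).2 h

/-- For an injective nonsurjective endomorphism of a finitely generated free group,
no image `φ^i(F)` is conjugate in `F` to a later image `φ^j(F)`. -/
theorem stmt_5 {G : Type*} [Group G] [IsFreeGroup G] [Group.FG G]
    (φ : Monoid.End G) (hinj : Function.Injective φ) (hsurj : ¬ Function.Surjective φ) :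
    ¬ ∃ (g : G) (i j : ℕ), i < j ∧
      Subgroup.map (MulAut.conj g).toMonoidHom (Subgroup.map (φ ^ i : Monoid.End G) ⊤) =
        Subgroup.map (φ ^ j : Monoid.End G) ⊤ := by
  rintro ⟨g, i, j, hij, hconj⟩
  set H := Subgroup.map (φ ^ i : Monoid.End G) ⊤
  have hshrink : H.map (MulAut.conj g).toMonoidHom < H :=
    hconj ▸ φ.strictAnti_map_pow_top hinj hsurj hij
  have hgrow : H < H.map (MulAut.conj g⁻¹).toMonoidHom := by
    have hid : (MulAut.conj g⁻¹).toMonoidHom.comp (MulAut.conj g).toMonoidHom = .id G := by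
      ext x
      simp [mul_assoc]
    simpa only [map_map, hid, map_id] using
      (map_lt_map_iff_of_injective (f := (MulAut.conj g⁻¹).toMonoidHom)
        (MulAut.conj g⁻¹).injective).2 hshrink
  -- written as ranges, so that `Group.FG` and the bound on `Group.rank` come for free
  let S n := ((MulAut.conj g⁻¹ ^ n).toMonoidHom.comp (φ ^ i : Monoid.End G)).range
  have hS : S = fun n => H.map (MulAut.conj g⁻¹ ^ n).toMonoidHom :=
    funext fun n => (MonoidHom.range_eq_map _).trans (map_map _ _ _).symm
  exact IsFreeGroup.not_strictMono_of_rank_le (S := S) (r := Group.rank G)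
    (fun n => Group.rank_range_le) (hS ▸ Subgroup.strictMono_map_pow _ hgrow)
end

section
/- Let A be a nonnegative square integer matrix that is irreducible but not primitive. Then A is permutation-similar to a transitive block permutation matrix with d ≥ 2 blocks; equivalently, the index set {1,…,n} admits a partition into d ≥ 2 nonempty classes C₀,…,C_{d-1} such that A_{ij} ≠ 0 implies that j ∈ C_m forces i ∈ C_{m+1 mod d}. -/
/-!
Fix a vertex `z` and let `d` be the gcd of the lengths of the closed walks at `z` in the digraph
of `A` (edges `i → j` where `A i j ≠ 0`). Two walks from `z` to `i`, closed up by one common walk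
from `i` back to `z`, give closed walks at `z`, so their lengths agree modulo `d`; minus this
residue is a colouring that drops by one along every edge. It takes all `d` values: a closed walk
at `z` has length at least `d`, and its `t`-th vertex has colour `-t`. If `d = 1`, the closed
walks at `z` have all sufficiently large lengths (Frobenius), and detouring through `z` joins any
two vertices by walks of all large lengths, i.e. `A` is primitive. Hence `d ≥ 2`.
-/

open Filter

namespace Matrix

variable {ι R : Type*} [Fintype ι] [DecidableEq ι] [Semiring R] [PartialOrder R]
  [CanonicallyOrderedAdd R] [NoZeroDivisors R] (A : Matrix ι ι R)

theorem pow_add_apply_pos_iff {a b : ℕ} {i j : ι} :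
    0 < (A ^ (a + b)) i j ↔ ∃ l, 0 < (A ^ a) i l ∧ 0 < (A ^ b) l j := by
  simp only [pow_add, mul_apply, pos_iff_ne_zero, ne_eq, Finset.sum_eq_zero_iff,
    Finset.mem_univ, true_implies, not_forall, mul_eq_zero, not_or]

theorem pow_add_apply_pos {a b : ℕ} {i l j : ι} (hil : 0 < (A ^ a) i l)
    (hlj : 0 < (A ^ b) l j) : 0 < (A ^ (a + b)) i j :=
  A.pow_add_apply_pos_iff.2 ⟨l, hil, hlj⟩

theorem exists_pow_apply_pos_of_le {s t : ℕ} {i j : ι} (h : 0 < (A ^ s) i j) (hts : t ≤ s) :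
    ∃ l, 0 < (A ^ t) i l := by
  rw [← Nat.add_sub_cancel' hts, pow_add_apply_pos_iff] at h
  obtain ⟨l, hl, -⟩ := h
  exact ⟨l, hl⟩

variable [Nontrivial R]

def returnTimes (z : ι) : AddSubmonoid ℕ where
  carrier := {k | 0 < (A ^ k) z z}
  zero_mem' := by simp [pos_iff_ne_zero]
  add_mem' ha hb := A.pow_add_apply_pos ha hb

noncomputable def period (z : ι) : ℕ := Nat.setGcd (A.returnTimes z)

variable {A} {z : ι}

theorem period_dvd_of_pow_apply_pos {k : ℕ} (h : 0 < (A ^ k) z z) : A.period z ∣ k :=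
  Nat.setGcd_dvd_of_mem h

theorem period_pos_of_pow_apply_pos {k : ℕ} (hk : 1 ≤ k) (h : 0 < (A ^ k) z z) :
    0 < A.period z :=
  Nat.pos_of_dvd_of_pos (period_dvd_of_pow_apply_pos h) hk

theorem exists_period_le_pow_apply_pos [NeZero (A.period z)] :
    ∃ s, A.period z ≤ s ∧ 0 < (A ^ s) z z := by
  obtain ⟨s, hs, hs0⟩ := Nat.exists_ne_zero_of_setGcd_ne_zero (NeZero.ne (A.period z))
  exact ⟨s, Nat.le_of_dvd (Nat.pos_of_ne_zero hs0) (period_dvd_of_pow_apply_pos hs), hs⟩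

theorem exists_forall_pow_apply_pos_of_period_dvd :
    ∃ N, ∀ k ≥ N, A.period z ∣ k → 0 < (A ^ k) z z := by
  have := Nat.exists_mem_closure_of_ge (A.returnTimes z : Set ℕ)
  rwa [AddSubmonoid.closure_eq] at this

theorem natCast_eq_of_pow_apply_pos {i : ι} {a b m : ℕ} (ha : 0 < (A ^ a) z i)
    (hb : 0 < (A ^ b) z i) (hback : 0 < (A ^ m) i z) : (a : ZMod (A.period z)) = b := by
  have hda := period_dvd_of_pow_apply_pos (A.pow_add_apply_pos ha hback)
  have hdb := period_dvd_of_pow_apply_pos (A.pow_add_apply_pos hb hback)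
  rw [ZMod.natCast_eq_natCast_iff]
  exact Nat.ModEq.add_right_cancel' m
    ((Nat.modEq_zero_iff_dvd.2 hda).trans (Nat.modEq_zero_iff_dvd.2 hdb).symm)

theorem eventually_pow_apply_pos_of_period_eq_one (hirr : ∀ i j, ∃ k, 0 < (A ^ k) i j)
    (h : A.period z = 1) : ∀ᶠ k in atTop, ∀ i j, 0 < (A ^ k) i j := by
  obtain ⟨N, hN⟩ := exists_forall_pow_apply_pos_of_period_dvd (A := A) (z := z)
  refine eventually_all.2 fun i => eventually_all.2 fun j => ?_
  obtain ⟨a, ha⟩ := hirr i z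
  obtain ⟨b, hb⟩ := hirr z j
  filter_upwards [eventually_ge_atTop (a + N + b)] with k hk
  obtain ⟨c, rfl⟩ := Nat.exists_eq_add_of_le hk
  have hz : 0 < (A ^ (N + c)) z z := hN _ (Nat.le_add_right N c) (h ▸ one_dvd _)
  convert A.pow_add_apply_pos (A.pow_add_apply_pos ha hz) hb using 2
  ring

theorem exists_surjective_cyclic_coloring (hirr : ∀ i j, ∃ k, 0 < (A ^ k) i j)
    [NeZero (A.period z)] :
    ∃ c : ι → ZMod (A.period z), Function.Surjective c ∧ ∀ i j, A i j ≠ 0 → c i = c j + 1 := by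
  choose len hlen using hirr z
  refine ⟨fun i => -(len i : ZMod (A.period z)), fun r => ?_, fun i j hij => ?_⟩
  · obtain ⟨s, hds, hs⟩ := exists_period_le_pow_apply_pos (A := A) (z := z)
    obtain ⟨v, hv⟩ := A.exists_pow_apply_pos_of_le hs ((ZMod.val_lt (-r)).le.trans hds)
    obtain ⟨m, hm⟩ := hirr v z
    refine ⟨v, ?_⟩
    simp only [natCast_eq_of_pow_apply_pos (hlen v) hv hm, ZMod.natCast_zmod_val, neg_neg]
  · have hedge : 0 < (A ^ 1) i j := by simpa [pos_iff_ne_zero] using hij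
    obtain ⟨m, hm⟩ := hirr j z
    have hlen_j := natCast_eq_of_pow_apply_pos (hlen j) (A.pow_add_apply_pos (hlen i) hedge) hm
    push_cast at hlen_j
    change -(len i : ZMod (A.period z)) = -(len j) + 1
    rw [hlen_j]
    ring

end Matrix

/-- An irreducible nonnegative matrix that is not primitive has the cyclic block structure:
the index set is partitioned into `d ≥ 2` nonempty classes, cyclically permuted in the sense
that a nonzero entry `A i j` with `j` in class `m` forces `i` into class `m + 1 (mod d)`. -/
theorem stmt_10 {n : ℕ} (A : Matrix (Fin n) (Fin n) ℕ)
    (hirr : ∀ i j : Fin n, ∃ k : ℕ, 1 ≤ k ∧ 0 < (A ^ k) i j)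
    (hprim : ¬ ∃ k : ℕ, 1 ≤ k ∧ ∀ i j : Fin n, 0 < (A ^ k) i j) :
    ∃ d : ℕ, 2 ≤ d ∧ ∃ c : Fin n → ZMod d, Function.Surjective c ∧
      ∀ i j : Fin n, A i j ≠ 0 → c i = c j + 1 := by
  obtain ⟨z⟩ : Nonempty (Fin n) := by
    by_contra hempty
    exact hprim ⟨1, le_rfl, fun i => (hempty ⟨i⟩).elim⟩
  have hirr' : ∀ i j, ∃ k, 0 < (A ^ k) i j := fun i j => (hirr i j).imp fun _ => And.right
  obtain ⟨s, hs1, hs⟩ := hirr z z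
  have hpos := Matrix.period_pos_of_pow_apply_pos hs1 hs
  have hne_one : A.period z ≠ 1 := fun h =>
    hprim (((Matrix.eventually_pow_apply_pos_of_period_eq_one hirr' h).and
      (eventually_ge_atTop 1)).exists.imp fun _ hk => ⟨hk.2, hk.1⟩)
  have : NeZero (A.period z) := ⟨hpos.ne'⟩
  exact ⟨A.period z, by omega, Matrix.exists_surjective_cyclic_coloring hirr'⟩
end

section
/- Let G = ⟨a, b, t | t^{-1} a t = aba, t^{-1} b t = bab⟩ be the ascending HNN extension of the free group F(a,b) by the endomorphism ψ(a) = aba, ψ(b) = bab. Then ψ(ab) = (ab)³, and the subgroup of G generated by ab and t is isomorphic to the Baumslag–Solitar group BS(1,3) = ⟨x, t | t^{-1} x t = x³⟩. Consequently G is not word-hyperbolic. -/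
/-!
The relations give `t⁻¹ (ab) t = (ab)³`, so `x ↦ ab, t ↦ t` is a homomorphism `BS(1,3) → G`
onto `⟨ab, t⟩`. It is injective: `G` acts on `ℚ` by `a, b : u ↦ u + 1/2`, `t : u ↦ u / 3`, and
this action already separates the normal forms `tᵃ xᵏ t⁻ᵇ` of `BS(1,3)`.

In a group satisfying the four-point condition, an element `h` of minimal length in its
conjugacy class that is long compared with `δ` has `|h²| ≥ 2|h| - O(δ)`, hence its powers grow
linearly. If `h` is conjugate to `h ^ m` with `m ≥ 2`, then `|h ^ m ^ p|` grows only linearly in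
`p`; so such an `h` is conjugate into a fixed ball, and the powers of `ab` fall into finitely
many conjugacy classes. In the affine action, however, conjugation multiplies the translation
length `k` of `(ab)ᵏ` by a power of `3`, so the `(ab)^(3k+1)` are pairwise non-conjugate.
-/

/-- Word "distance" from `g` to `h` with respect to a finite generating set `S`:
the infimum of lengths of words in `S ∪ S⁻¹` representing `g⁻¹h`. -/
noncomputable def wordDist {G : Type*} [Group G] (S : Finset G) (g h : G) : ℝ :=
  sInf {r : ℝ | ∃ l : List G, (∀ x ∈ l, x ∈ S ∨ x⁻¹ ∈ S) ∧ l.prod = g⁻¹ * h ∧ r = l.length}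

/-- A group is word-hyperbolic if some word metric on it satisfies Gromov's four-point
condition for some `δ ≥ 0`. -/
def IsWordHyperbolic (G : Type*) [Group G] : Prop :=
  ∃ (S : Finset G) (δ : ℝ), 0 ≤ δ ∧ Subgroup.closure (S : Set G) = ⊤ ∧
    ∀ x y z t : G,
      wordDist S x z + wordDist S y t ≤
        max (wordDist S x y + wordDist S z t) (wordDist S x t + wordDist S y z) + δ

/-- Relators of `G = ⟨a, b, t | t⁻¹at = aba, t⁻¹bt = bab⟩`, with `0 ↦ a`, `1 ↦ b`, `2 ↦ t`. -/
def sapirRels : Set (FreeGroup (Fin 3)) :=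
  {(FreeGroup.of 2)⁻¹ * FreeGroup.of 0 * FreeGroup.of 2 *
      (FreeGroup.of 0 * FreeGroup.of 1 * FreeGroup.of 0)⁻¹,
   (FreeGroup.of 2)⁻¹ * FreeGroup.of 1 * FreeGroup.of 2 *
      (FreeGroup.of 1 * FreeGroup.of 0 * FreeGroup.of 1)⁻¹}

/-- The ascending HNN extension of `F(a,b)` by `ψ(a) = aba`, `ψ(b) = bab`. -/
abbrev SapirLikeGroup : Type := PresentedGroup sapirRels

/-- Relator of `BS(1,3) = ⟨x, t | t⁻¹xt = x³⟩`, with `0 ↦ x`, `1 ↦ t`. -/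
def bs13Rels : Set (FreeGroup (Fin 2)) :=
  {(FreeGroup.of 1)⁻¹ * FreeGroup.of 0 * FreeGroup.of 1 * ((FreeGroup.of 0) ^ 3)⁻¹}

/-- The Baumslag–Solitar group `BS(1,3)`. -/
abbrev BS13 : Type := PresentedGroup bs13Rels

open Equiv (Perm addRight)

section ConjPow

variable {G : Type*} [Group G]

theorem inv_mul_pow_mul (c g : G) (k : ℕ) : c⁻¹ * g ^ k * c = (c⁻¹ * g * c) ^ k := by
  simpa only [inv_inv] using (conj_pow (a := c⁻¹) (b := g) (i := k)).symm

theorem inv_pow_mul_mul_pow_eq_pow_pow {c g : G} {m : ℕ} (h : c⁻¹ * g * c = g ^ m) (p : ℕ) :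
    (c ^ p)⁻¹ * g * c ^ p = g ^ m ^ p := by
  induction p with
  | zero => simp
  | succ p ih =>
    calc (c ^ (p + 1))⁻¹ * g * c ^ (p + 1) = c⁻¹ * ((c ^ p)⁻¹ * g * c ^ p) * c := by group
      _ = (c⁻¹ * g * c) ^ m ^ p := by
        rw [ih, inv_mul_pow_mul]
      _ = g ^ m ^ (p + 1) := by rw [h, ← pow_mul, pow_succ']

theorem inv_pow_mul_zpow_mul_pow_eq {c g : G} {m : ℕ} (h : c⁻¹ * g * c = g ^ m) (p : ℕ)
    (k : ℤ) : (c ^ p)⁻¹ * g ^ k * c ^ p = g ^ ((m : ℤ) ^ p * k) := by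
  have hconj := (conj_zpow (a := (c ^ p)⁻¹) (b := g) (i := k)).symm
  rw [inv_inv, inv_pow_mul_mul_pow_eq_pow_pow h] at hconj
  rw [hconj, zpow_mul]
  norm_cast

end ConjPow

section AffineScaling

variable {K : Type*} [Field K]

def affineScalingSubgroup (r : K) (hr : r ≠ 0) : Subgroup (Perm K) where
  carrier := {f | ∃ q : ℤ, ∀ u v, f (u + v) = f u + r ^ q * v}
  one_mem' := ⟨0, fun u v => by simp⟩
  mul_mem' := by
    rintro f g ⟨q, hf⟩ ⟨q', hg⟩
    refine ⟨q + q', fun u v => ?_⟩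
    simp only [Perm.mul_apply, hg, hf, zpow_add₀ hr, mul_assoc]
  inv_mem' := by
    rintro f ⟨q, hf⟩
    refine ⟨-q, fun u v => f.injective ?_⟩
    simp [hf, mul_inv_cancel_left₀ (zpow_ne_zero q hr)]

theorem exists_eq_zpow_mul_of_mul_addRight {r : K} {hr : r ≠ 0} {f : Perm K}
    (hf : f ∈ affineScalingSubgroup r hr) {a b : K} (h : f * addRight a = addRight b * f) :
    ∃ q : ℤ, b = r ^ q * a := by
  obtain ⟨q, hq⟩ := hf
  refine ⟨q, ?_⟩
  have := congrArg (· 0) h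
  simp only [Perm.mul_apply, Equiv.coe_addRight] at this
  linear_combination hq 0 a - this

end AffineScaling

theorem eq_of_natCast_eq_three_zpow_mul {i j : ℕ} (hi : ¬ 3 ∣ i) (hj : ¬ 3 ∣ j) {q : ℤ}
    (h : (j : ℚ) = 3 ^ q * i) : j = i := by
  obtain ⟨n, rfl | rfl⟩ := q.eq_nat_or_neg
  · have hji : j = 3 ^ n * i := by exact_mod_cast h
    rcases n with _ | n
    · simpa using hji
    · exact absurd (hji ▸ dvd_mul_of_dvd_left (dvd_pow_self 3 n.succ_ne_zero) i) hj
  · have hij : i = 3 ^ n * j := by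
      rw [zpow_neg, zpow_natCast] at h
      have : (i : ℚ) = 3 ^ n * j := by
        rw [h, ← mul_assoc, mul_inv_cancel₀ (by positivity), one_mul]
      exact_mod_cast this
    rcases n with _ | n
    · simpa using hij.symm
    · exact absurd (hij ▸ dvd_mul_of_dvd_left (dvd_pow_self 3 n.succ_ne_zero) j) hi

open Filter Topology in
theorem exists_add_mul_lt_mul_two_pow (A B : ℝ) {ε : ℝ} (hε : 0 < ε) :
    ∃ p : ℕ, A + B * p < ε * 2 ^ p := by
  have h : Tendsto (fun p : ℕ => (A + B * p) / 2 ^ p) atTop (𝓝 0) := by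
    have h₀ := tendsto_pow_const_div_const_pow_of_one_lt 0 one_lt_two
    have h₁ := tendsto_pow_const_div_const_pow_of_one_lt 1 one_lt_two
    convert (h₀.const_mul A).add (h₁.const_mul B) using 2
    · ring
    · simp
  obtain ⟨p, hp⟩ := (h.eventually (gt_mem_nhds hε)).exists
  exact ⟨p, by rwa [div_lt_iff₀ (by positivity)] at hp⟩

section WordMetric

variable {G : Type*} [Group G] {S : Finset G}

def IsWord (S : Finset G) (l : List G) : Prop := ∀ x ∈ l, x ∈ S ∨ x⁻¹ ∈ S

theorem IsWord.append {l l' : List G} (hl : IsWord S l) (hl' : IsWord S l') :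
    IsWord S (l ++ l') := by
  intro x hx
  rcases List.mem_append.mp hx with h | h
  exacts [hl x h, hl' x h]

theorem IsWord.sublist {l l' : List G} (hl : IsWord S l) (h : l'.Sublist l) : IsWord S l' :=
  fun x hx => hl x (h.subset hx)

theorem IsWord.reverse_map_inv {l : List G} (hl : IsWord S l) :
    IsWord S (l.map (·⁻¹)).reverse := by
  intro x hx
  obtain ⟨y, hy, rfl⟩ := List.mem_map.mp (List.mem_reverse.mp hx)
  rw [inv_inv]
  exact (hl y hy).symm

noncomputable def wordLength (S : Finset G) (g : G) : ℕ :=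
  sInf {n | ∃ l : List G, IsWord S l ∧ l.prod = g ∧ l.length = n}

theorem wordLength_prod_le {l : List G} (hl : IsWord S l) : wordLength S l.prod ≤ l.length :=
  Nat.sInf_le ⟨l, hl, rfl, rfl⟩

theorem wordLength_one : wordLength S (1 : G) = 0 :=
  Nat.le_zero.mp (wordLength_prod_le (l := []) (by simp [IsWord]))

theorem exists_isWord_prod_eq (hS : Subgroup.closure (S : Set G) = ⊤) (g : G) :
    ∃ l, IsWord S l ∧ l.prod = g := by
  have hg : g ∈ Submonoid.closure ((S : Set G) ∪ (S : Set G)⁻¹) := by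
    rw [← Subgroup.closure_toSubmonoid, hS]
    trivial
  exact Submonoid.exists_list_of_mem_closure hg

theorem exists_isWord_length_eq_wordLength (hS : Subgroup.closure (S : Set G) = ⊤) (g : G) :
    ∃ l, IsWord S l ∧ l.prod = g ∧ l.length = wordLength S g := by
  obtain ⟨l, hl, hlg⟩ := exists_isWord_prod_eq hS g
  exact Nat.sInf_mem (s := {n | ∃ l : List G, IsWord S l ∧ l.prod = g ∧ l.length = n})
    ⟨l.length, l, hl, hlg, rfl⟩

theorem wordDist_eq_wordLength (hS : Subgroup.closure (S : Set G) = ⊤) (g h : G) :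
    wordDist S g h = wordLength S (g⁻¹ * h) := by
  refine IsLeast.csInf_eq ⟨?_, ?_⟩
  · obtain ⟨l, hl, hprod, hlen⟩ := exists_isWord_length_eq_wordLength hS (g⁻¹ * h)
    exact ⟨l, hl, hprod, congrArg _ hlen.symm⟩
  · rintro r ⟨l, hl, hprod, rfl⟩
    exact_mod_cast hprod ▸ wordLength_prod_le hl

theorem wordLength_mul_le (hS : Subgroup.closure (S : Set G) = ⊤) (g h : G) :
    wordLength S (g * h) ≤ wordLength S g + wordLength S h := by
  obtain ⟨l, hl, rfl, hlen⟩ := exists_isWord_length_eq_wordLength hS g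
  obtain ⟨l', hl', rfl, hlen'⟩ := exists_isWord_length_eq_wordLength hS h
  rw [← hlen, ← hlen', ← List.length_append, ← List.prod_append]
  exact wordLength_prod_le (hl.append hl')

theorem wordLength_inv (hS : Subgroup.closure (S : Set G) = ⊤) (g : G) :
    wordLength S g⁻¹ = wordLength S g := by
  suffices h : ∀ g : G, wordLength S g⁻¹ ≤ wordLength S g from
    (h g).antisymm (by simpa using h g⁻¹)
  intro g
  obtain ⟨l, hl, rfl, hlen⟩ := exists_isWord_length_eq_wordLength hS g
  rw [← hlen, List.prod_inv_reverse]
  simpa using wordLength_prod_le hl.reverse_map_inv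

theorem wordLength_pow_le (hS : Subgroup.closure (S : Set G) = ⊤) (g : G) (n : ℕ) :
    wordLength S (g ^ n) ≤ n * wordLength S g := by
  induction n with
  | zero => simp [wordLength_one]
  | succ n ih =>
    rw [pow_succ, add_mul, one_mul]
    exact (wordLength_mul_le hS _ _).trans (by omega)

theorem wordLength_inv_mul_mul_le (hS : Subgroup.closure (S : Set G) = ⊤) (c g : G) :
    wordLength S (c⁻¹ * g * c) ≤ wordLength S g + 2 * wordLength S c := by
  have h₁ := wordLength_mul_le hS (c⁻¹ * g) c
  have h₂ := wordLength_mul_le hS c⁻¹ g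
  rw [wordLength_inv hS] at h₂
  omega

theorem finite_setOf_wordLength_le (hS : Subgroup.closure (S : Set G) = ⊤) (n : ℕ) :
    {g : G | wordLength S g ≤ n}.Finite := by
  let T : Set G := S ∪ (S : Set G)⁻¹
  have : Finite T := (S.finite_toSet.union S.finite_toSet.inv).to_subtype
  refine ((List.finite_length_le T n).image fun l => (l.map Subtype.val).prod).subset ?_
  intro g hg
  obtain ⟨l, hl, rfl, hlen⟩ := exists_isWord_length_eq_wordLength hS g
  lift l to List T using hl
  refine ⟨l, ?_, rfl⟩
  calc l.length = (l.map Subtype.val).length := (List.length_map _).symm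
    _ ≤ n := hlen ▸ hg

theorem wordLength_prod_take_inv_mul_prod_take_le {l : List G} (hl : IsWord S l) {i k : ℕ}
    (hik : i ≤ k) : wordLength S ((l.take i).prod⁻¹ * (l.take k).prod) ≤ k - i := by
  have hsplit : (l.take k).prod = (l.take i).prod * ((l.take k).drop i).prod := by
    conv_lhs => rw [← List.take_append_drop i (l.take k)]
    rw [List.prod_append, List.take_take, min_eq_left hik]
  rw [hsplit, inv_mul_cancel_left]
  have hsub : ((l.take k).drop i).Sublist l := (List.drop_sublist _ _).trans (List.take_sublist _ _)
  refine (wordLength_prod_le (hl.sublist hsub)).trans ?_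
  simp only [List.length_drop, List.length_take]
  omega

theorem exists_geodesic (hS : Subgroup.closure (S : Set G) = ⊤) (g : G) :
    ∃ γ : ℕ → G, γ 0 = 1 ∧ γ (wordLength S g) = g ∧
      ∀ i k, i ≤ k → k ≤ wordLength S g → wordLength S ((γ i)⁻¹ * γ k) = k - i := by
  obtain ⟨l, hl, rfl, hlen⟩ := exists_isWord_length_eq_wordLength hS g
  refine ⟨fun i => (l.take i).prod, by simp, by simp [← hlen], fun i k hik hk => ?_⟩
  dsimp only
  have hupper (i k : ℕ) (hik : i ≤ k) := wordLength_prod_take_inv_mul_prod_take_le hl hik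
  have h₀ := hupper 0 i (Nat.zero_le i)
  have h₁ := hupper k l.length (hlen ▸ hk)
  have h₂ := wordLength_mul_le hS (l.take i).prod ((l.take i).prod⁻¹ * (l.take k).prod)
  have h₃ := wordLength_mul_le hS (l.take k).prod ((l.take k).prod⁻¹ * l.prod)
  simp only [List.take_zero, List.prod_nil, inv_one, one_mul, List.take_length,
    mul_inv_cancel_left] at h₀ h₁ h₂ h₃
  have := hupper i k hik
  omega

theorem exists_wordLength_eq_of_two_mul_le (hS : Subgroup.closure (S : Set G) = ⊤) {g : G}
    {j : ℕ} (hjg : 2 * j ≤ wordLength S g) :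
    ∃ u v : G, wordLength S u = j ∧ wordLength S (u⁻¹ * g) + j = wordLength S g ∧
      wordLength S v + j = wordLength S g ∧ wordLength S (v⁻¹ * g) = j ∧
      wordLength S (u⁻¹ * v) + 2 * j ≤ wordLength S g := by
  obtain ⟨γ, hγ₀, hγn, hγ⟩ := exists_geodesic hS g
  set n := wordLength S g
  have hu := hγ 0 j (by omega) (by omega)
  have hug := hγ j n (by omega) le_rfl
  have hv := hγ 0 (n - j) (by omega) (by omega)
  have hvg := hγ (n - j) n (by omega) le_rfl
  have huv := hγ j (n - j) (by omega) (by omega)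
  rw [hγ₀, inv_one, one_mul] at hu hv
  rw [hγn] at hug hvg
  exact ⟨γ j, γ (n - j), by omega, by omega, by omega, by omega, by omega⟩

end WordMetric

section FourPoint

variable {G : Type*} [Group G] {S : Finset G} {δ : ℝ}

noncomputable def gromovProduct (S : Finset G) (w x y : G) : ℝ :=
  (wordDist S w x + wordDist S w y - wordDist S x y) / 2

def FourPointCondition (S : Finset G) (δ : ℝ) : Prop :=
  ∀ x y z t : G, wordDist S x z + wordDist S y t ≤
    max (wordDist S x y + wordDist S z t) (wordDist S x t + wordDist S y z) + δ

theorem wordDist_comm (hS : Subgroup.closure (S : Set G) = ⊤) (g h : G) :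
    wordDist S g h = wordDist S h g := by
  rw [wordDist_eq_wordLength hS, wordDist_eq_wordLength hS, ← wordLength_inv hS, mul_inv_rev,
    inv_inv]

theorem FourPointCondition.le_gromovProduct (hS : Subgroup.closure (S : Set G) = ⊤)
    (h4 : FourPointCondition S δ) {w x y z : G} {r : ℝ} (hxy : r ≤ gromovProduct S w x y)
    (hyz : r ≤ gromovProduct S w y z) : r - δ / 2 ≤ gromovProduct S w x z := by
  have h := h4 x y z w
  rw [wordDist_comm hS x w, wordDist_comm hS y w, wordDist_comm hS z w] at h
  unfold gromovProduct at *
  rcases max_cases (wordDist S x y + wordDist S w z) (wordDist S w x + wordDist S y z)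
    with ⟨hmax, -⟩ | ⟨hmax, -⟩ <;> rw [hmax] at h <;> linarith

theorem FourPointCondition.nonneg (hS : Subgroup.closure (S : Set G) = ⊤)
    (h4 : FourPointCondition S δ) : 0 ≤ δ := by
  simpa [wordDist_eq_wordLength hS, wordLength_one] using h4 1 1 1 1

theorem FourPointCondition.wordDist_le_of_le_gromovProduct
    (hS : Subgroup.closure (S : Set G) = ⊤) (h4 : FourPointCondition S δ) {w x y p q : G}
    {r : ℝ}
    (hp : wordDist S w p = r) (hpx : wordDist S w p + wordDist S p x = wordDist S w x)
    (hq : wordDist S w q = r) (hqy : wordDist S w q + wordDist S q y = wordDist S w y)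
    (hxy : r ≤ gromovProduct S w x y) : wordDist S p q ≤ 2 * δ := by
  have hpy : r - δ / 2 ≤ gromovProduct S w p y :=
    h4.le_gromovProduct hS (by unfold gromovProduct; linarith) hxy
  have hpq : r - δ / 2 - δ / 2 ≤ gromovProduct S w p q := by
    refine h4.le_gromovProduct hS hpy ?_
    rw [gromovProduct, wordDist_comm hS y q]
    linarith [h4.nonneg hS]
  unfold gromovProduct at hpq
  linarith

theorem FourPointCondition.two_mul_wordLength_le_wordLength_sq
    (hS : Subgroup.closure (S : Set G) = ⊤) (h4 : FourPointCondition S δ) {g : G}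
    (hmin : ∀ h, IsConj g h → wordLength S g ≤ wordLength S h) {j : ℕ} (hj : δ < j)
    (hjg : 2 * j ≤ wordLength S g) : 2 * wordLength S g ≤ wordLength S (g ^ 2) + 2 * j := by
  by_contra! hlt
  obtain ⟨u, v, hu, hug, hv, hvg, huv⟩ := exists_wordLength_eq_of_two_mul_le hS hjg
  set n := wordLength S g
  have hdist (x y : G) : wordDist S x y = wordLength S (x⁻¹ * y) := wordDist_eq_wordLength hS x y
  have dgv : wordDist S g v = j := by
    rw [hdist, ← wordLength_inv hS, mul_inv_rev, inv_inv, hvg]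
  have dv1 : wordDist S v 1 + j = n := by
    rw [hdist, mul_one, wordLength_inv hS]
    exact_mod_cast hv
  have dg1 : wordDist S g 1 = n := by rw [hdist, mul_one, wordLength_inv hS]
  have dggu : wordDist S g (g * u) = j := by rw [hdist, inv_mul_cancel_left, hu]
  have dgug2 : wordDist S (g * u) (g ^ 2) + j = n := by
    rw [hdist, show (g * u)⁻¹ * g ^ 2 = u⁻¹ * g by group]
    exact_mod_cast hug
  have dgg2 : wordDist S g (g ^ 2) = n := by rw [hdist, pow_two, inv_mul_cancel_left]
  have d1g2 : wordDist S 1 (g ^ 2) = wordLength S (g ^ 2) := by rw [hdist, inv_one, one_mul]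
  -- `v` and `g * u` sit at distance `j` from `g` towards `1` and `g²`. As `g²` is short they are
  -- `2δ`-close, which makes the conjugate `u⁻¹ g u` shorter than `g`.
  have hclose : wordDist S v (g * u) ≤ 2 * δ := by
    refine h4.wordDist_le_of_le_gromovProduct hS (w := g) (x := 1) (y := g ^ 2) dgv ?_ dggu ?_ ?_
    · linarith
    · linarith
    · have : (wordLength S (g ^ 2) : ℝ) + 2 * j < 2 * n := by exact_mod_cast hlt
      unfold gromovProduct
      linarith
  have hconj := hmin (u⁻¹ * g * u) (isConj_iff.mpr ⟨u⁻¹, by group⟩)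
  have htri := wordLength_mul_le hS (u⁻¹ * v) (v⁻¹ * (g * u))
  rw [show u⁻¹ * v * (v⁻¹ * (g * u)) = u⁻¹ * g * u by group] at htri
  rw [hdist] at hclose
  have : (n : ℝ) ≤ wordLength S (u⁻¹ * v) + wordLength S (v⁻¹ * (g * u)) := by
    exact_mod_cast hconj.trans htri
  have : (wordLength S (u⁻¹ * v) : ℝ) + 2 * j ≤ n := by exact_mod_cast huv
  linarith

theorem FourPointCondition.mul_le_wordLength_pow (hS : Subgroup.closure (S : Set G) = ⊤)
    (h4 : FourPointCondition S δ) {g : G} {R : ℝ}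
    (hsq : 2 * (wordLength S g : ℝ) ≤ wordLength S (g ^ 2) + R) (hR : R + δ < wordLength S g)
    (i : ℕ) : i * ((wordLength S g : ℝ) - R - δ) ≤ wordLength S (g ^ i) := by
  have hdist (x y : G) : wordDist S x y = wordLength S (x⁻¹ * y) := wordDist_eq_wordLength hS x y
  have hR₀ : 0 ≤ R := by
    have : wordLength S (g ^ 2) ≤ 2 * wordLength S g := wordLength_pow_le hS g 2
    have : (wordLength S (g ^ 2) : ℝ) ≤ 2 * wordLength S g := by exact_mod_cast this
    linarith
  have hstep (i : ℕ) :
      (wordLength S (g ^ i) : ℝ) + (wordLength S g - R - δ) ≤ wordLength S (g ^ (i + 1)) := by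
    induction i with
    | zero =>
      rw [pow_zero, zero_add, pow_one, wordLength_one, Nat.cast_zero]
      linarith [h4.nonneg hS]
    | succ i ih =>
      have h := h4 1 (g ^ i) (g ^ (i + 1)) (g ^ (i + 2))
      simp only [hdist, inv_one, one_mul] at h
      rw [show (g ^ i)⁻¹ * g ^ (i + 2) = g ^ 2 by group,
        show (g ^ (i + 1))⁻¹ * g ^ (i + 2) = g by group,
        show (g ^ i)⁻¹ * g ^ (i + 1) = g by group] at h
      rcases max_cases ((wordLength S (g ^ i) : ℝ) + wordLength S g)
        ((wordLength S (g ^ (i + 2)) : ℝ) + wordLength S g) with ⟨hmax, -⟩ | ⟨hmax, -⟩ <;>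
        rw [hmax] at h <;> linarith
  induction i with
  | zero => simp [wordLength_one]
  | succ i ih => push_cast; linarith [hstep i]

theorem FourPointCondition.exists_isConj_wordLength_le (hS : Subgroup.closure (S : Set G) = ⊤)
    (h4 : FourPointCondition S δ) {j : ℕ} (hj : δ < j) {g c : G} {m : ℕ} (hm : 2 ≤ m)
    (hc : c⁻¹ * g * c = g ^ m) :
    ∃ h, IsConj g h ∧ (wordLength S h : ℝ) ≤ 2 * j + δ := by
  obtain ⟨h, hgh, hmin⟩ := (InvImage.wf (wordLength S) wellFounded_lt).has_min
    {h | IsConj g h} ⟨g, IsConj.refl g⟩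
  refine ⟨h, hgh, le_of_not_gt fun hlong => ?_⟩
  obtain ⟨v, rfl⟩ := isConj_iff.mp hgh
  set h := v * g * v⁻¹
  set c' := v * c * v⁻¹
  have hc' : c'⁻¹ * h * c' = h ^ m := by
    simp only [h, c', conj_pow, ← hc]
    group
  have hsq := h4.two_mul_wordLength_le_wordLength_sq hS
    (fun h' hh' => not_lt.mp (hmin h' (hgh.trans hh'))) hj
    (by have := h4.nonneg hS; exact_mod_cast (show (2 * j : ℝ) ≤ wordLength S h by linarith))
  have hlow := h4.mul_le_wordLength_pow hS (R := 2 * j) (by exact_mod_cast hsq) hlong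
  have hε : 0 < (wordLength S h : ℝ) - 2 * j - δ := by linarith
  obtain ⟨p, hp⟩ := exists_add_mul_lt_mul_two_pow (wordLength S h) (2 * wordLength S c') hε
  -- `h ^ m ^ p` is conjugate to `h` by `c' ^ p`, so its length grows only linearly in `p`.
  have hup : wordLength S (h ^ m ^ p) ≤ wordLength S h + 2 * (p * wordLength S c') := by
    rw [← inv_pow_mul_mul_pow_eq_pow_pow hc' p]
    exact (wordLength_inv_mul_mul_le hS _ _).trans
      (Nat.add_le_add_left (Nat.mul_le_mul_left 2 (wordLength_pow_le hS c' p)) _)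
  have h2m : (2 : ℝ) ^ p ≤ (m : ℝ) ^ p :=
    pow_le_pow_left₀ zero_le_two (by exact_mod_cast hm) p
  have := hlow (m ^ p)
  push_cast at this
  have : (wordLength S (h ^ m ^ p) : ℝ) ≤ wordLength S h + 2 * (p * wordLength S c') := by
    exact_mod_cast hup
  nlinarith [mul_le_mul_of_nonneg_left h2m hε.le]

theorem IsWordHyperbolic.finite_range_conjClassesMk_pow (hG : IsWordHyperbolic G) {x c : G}
    {m : ℕ} (hm : 2 ≤ m) (hc : c⁻¹ * x * c = x ^ m) :
    (Set.range fun k : ℕ => ConjClasses.mk (x ^ k)).Finite := by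
  obtain ⟨S, δ, -, hS, h4 : FourPointCondition S δ⟩ := hG
  set j := ⌊δ⌋₊ + 1
  refine ((finite_setOf_wordLength_le hS ⌊2 * j + δ⌋₊).image ConjClasses.mk).subset ?_
  rintro _ ⟨k, rfl⟩
  have hck : c⁻¹ * x ^ k * c = (x ^ k) ^ m := by
    rw [inv_mul_pow_mul, hc, ← pow_mul, ← pow_mul, mul_comm]
  obtain ⟨h, hxh, hh⟩ := h4.exists_isConj_wordLength_le hS (j := j)
    (by exact_mod_cast Nat.lt_floor_add_one δ) hm hck
  exact ⟨h, Nat.le_floor hh, (ConjClasses.mk_eq_mk_iff_isConj.mpr hxh).symm⟩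

end FourPoint

namespace BS13

def x : BS13 := PresentedGroup.of 0

def t : BS13 := PresentedGroup.of 1

theorem t_inv_mul_x_mul_t : t⁻¹ * x * t = x ^ 3 :=
  PresentedGroup.mk_eq_mk_of_mul_inv_mem (Set.mem_singleton _)

theorem exists_eq_pow_mul_zpow_mul_inv_pow (g : BS13) :
    ∃ (a b : ℕ) (k : ℤ), g = t ^ a * x ^ k * (t ^ b)⁻¹ := by
  have conj := inv_pow_mul_zpow_mul_pow_eq t_inv_mul_x_mul_t
  simp only [Nat.cast_ofNat] at conj
  let N : Subgroup BS13 :=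
    { carrier := {g | ∃ (a b : ℕ) (k : ℤ), g = t ^ a * x ^ k * (t ^ b)⁻¹}
      one_mem' := ⟨0, 0, 0, by simp⟩
      mul_mem' := by
        rintro _ _ ⟨a, b, k, rfl⟩ ⟨c, d, l, rfl⟩
        refine ⟨a + c, b + d, 3 ^ c * k + 3 ^ b * l, ?_⟩
        rw [zpow_add, ← conj, ← conj]
        group
      inv_mem' := by
        rintro _ ⟨a, b, k, rfl⟩
        exact ⟨b, a, -k, by group⟩ }
  refine PresentedGroup.generated_by _ N (fun i => ?_) g
  fin_cases i
  exacts [⟨0, 0, 1, by simp [x]⟩, ⟨1, 0, 0, by simp [t]⟩]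

end BS13

namespace SapirLikeGroup

def a : SapirLikeGroup := PresentedGroup.of 0

def b : SapirLikeGroup := PresentedGroup.of 1

def t : SapirLikeGroup := PresentedGroup.of 2

theorem t_inv_mul_a_mul_t : t⁻¹ * a * t = a * b * a :=
  PresentedGroup.mk_eq_mk_of_mul_inv_mem (Set.mem_insert _ _)

theorem t_inv_mul_b_mul_t : t⁻¹ * b * t = b * a * b :=
  PresentedGroup.mk_eq_mk_of_mul_inv_mem (Set.mem_insert_of_mem _ rfl)

theorem t_inv_mul_ab_mul_t : t⁻¹ * (a * b) * t = (a * b) ^ 3 :=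
  calc t⁻¹ * (a * b) * t = (t⁻¹ * a * t) * (t⁻¹ * b * t) := by group
    _ = (a * b) ^ 3 := by
      rw [t_inv_mul_a_mul_t, t_inv_mul_b_mul_t]
      simp only [pow_succ, pow_zero, one_mul, mul_assoc]

def ofBS13 : BS13 →* SapirLikeGroup :=
  PresentedGroup.toGroup (f := ![a * b, t]) <| by
    rintro r rfl
    simpa [mul_inv_eq_one] using t_inv_mul_ab_mul_t

theorem ofBS13_x : ofBS13 BS13.x = a * b := PresentedGroup.toGroup.of _

theorem ofBS13_t : ofBS13 BS13.t = t := PresentedGroup.toGroup.of _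

theorem range_ofBS13 : ofBS13.range = Subgroup.closure {a * b, t} := by
  rw [MonoidHom.range_eq_map, ← PresentedGroup.closure_range_of, MonoidHom.map_closure,
    ← Set.range_comp, ← Matrix.range_cons_cons_empty (a * b) t ![]]
  congr 2
  ext i
  fin_cases i
  exacts [ofBS13_x, ofBS13_t]

def affineAction : SapirLikeGroup →* Perm ℚ :=
  PresentedGroup.toGroup
    (f := ![addRight (1 / 2), addRight (1 / 2),
      MulAction.toPermHom ℚˣ ℚ (Units.mk0 3 three_ne_zero)⁻¹]) <| by
      rintro r (rfl | rfl) <;>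
      · ext u
        simp [Units.smul_def]
        ring

theorem affineAction_ab : affineAction (a * b) = addRight 1 := by
  ext u
  simp [affineAction, a, b, PresentedGroup.toGroup.of]
  ring

theorem affineAction_t :
    affineAction t = MulAction.toPermHom ℚˣ ℚ (Units.mk0 3 three_ne_zero)⁻¹ :=
  PresentedGroup.toGroup.of _

theorem affineAction_mem (g : SapirLikeGroup) :
    affineAction g ∈ affineScalingSubgroup (3 : ℚ) three_ne_zero := by
  refine PresentedGroup.generated_by _
    ((affineScalingSubgroup 3 three_ne_zero).comap affineAction) (fun i => ?_) g
  fin_cases i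
  all_goals
    simp only [Subgroup.mem_comap, affineAction, PresentedGroup.toGroup.of]
  · exact ⟨0, fun u v => by simp; ring⟩
  · exact ⟨0, fun u v => by simp; ring⟩
  · exact ⟨-1, fun u v => by simp [Units.smul_def]⟩

theorem ofBS13_injective : Function.Injective ofBS13 := by
  rw [injective_iff_map_eq_one]
  intro g hg
  obtain ⟨m, n, k, rfl⟩ := BS13.exists_eq_pow_mul_zpow_mul_inv_pow g
  set σ : ℚˣ →* Perm ℚ := MulAction.toPermHom ℚˣ ℚ
  set c : ℚˣ := (Units.mk0 3 three_ne_zero)⁻¹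
  have hx : affineAction (ofBS13 BS13.x) = addRight 1 := by rw [ofBS13_x, affineAction_ab]
  have ht : affineAction (ofBS13 BS13.t) = σ c := by rw [ofBS13_t, affineAction_t]
  have hperm : σ (c ^ m) * addRight (k : ℚ) * (σ (c ^ n))⁻¹ = 1 := by
    rw [← map_one affineAction, ← hg]
    simp only [map_mul, map_pow, map_inv, map_zpow, hx, ht, Equiv.zsmul_addRight, zsmul_eq_mul,
      mul_one]
  obtain rfl : k = 0 := by simpa [σ, Units.smul_def] using congrArg (· 0) hperm
  have h1 : ((3 : ℚ) ^ m)⁻¹ * 3 ^ n = 1 := by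
    simpa [σ, c, Units.smul_def] using congrArg (· 1) hperm
  have hmn : (3 : ℚ) ^ m = 3 ^ n := (inv_mul_eq_one₀ (by positivity)).mp h1
  obtain rfl : m = n := Nat.pow_right_injective (by norm_num : 2 ≤ 3) (by exact_mod_cast hmn)
  group

theorem exists_eq_three_zpow_mul_of_isConj {i j : ℕ} (h : IsConj ((a * b) ^ i) ((a * b) ^ j)) :
    ∃ q : ℤ, (j : ℚ) = 3 ^ q * i := by
  obtain ⟨c, hc⟩ := isConj_iff.mp h
  refine exists_eq_zpow_mul_of_mul_addRight (affineAction_mem c) ?_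
  have hpow (n : ℕ) : affineAction ((a * b) ^ n) = addRight (n : ℚ) := by
    simp [affineAction_ab]
  rw [← mul_inv_eq_iff_eq_mul, ← map_inv, ← hpow, ← hpow, ← map_mul, ← map_mul, hc]

theorem infinite_range_conjClassesMk_ab_pow :
    (Set.range fun k : ℕ => ConjClasses.mk ((a * b) ^ k)).Infinite := by
  have hinj : Function.Injective fun k : ℕ => ConjClasses.mk ((a * b) ^ (3 * k + 1)) := by
    intro i j hij
    obtain ⟨q, hq⟩ :=
      exists_eq_three_zpow_mul_of_isConj (ConjClasses.mk_eq_mk_iff_isConj.mp hij)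
    have := eq_of_natCast_eq_three_zpow_mul (by omega) (by omega) hq
    omega
  exact (Set.infinite_range_of_injective hinj).mono (Set.range_comp_subset_range _ _)

end SapirLikeGroup

/-- For `G = ⟨a,b,t | t⁻¹at = aba, t⁻¹bt = bab⟩`: the defining endomorphism `ψ` of `F(a,b)`
satisfies `ψ(ab) = (ab)³`, the subgroup `⟨ab, t⟩ ≤ G` is isomorphic to `BS(1,3)`, and
consequently `G` is not word-hyperbolic. -/
theorem stmt_15 :
    (∀ ψ : FreeGroup Bool →* FreeGroup Bool,
      ψ (FreeGroup.of true) = FreeGroup.of true * FreeGroup.of false * FreeGroup.of true →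
      ψ (FreeGroup.of false) = FreeGroup.of false * FreeGroup.of true * FreeGroup.of false →
      ψ (FreeGroup.of true * FreeGroup.of false) =
        (FreeGroup.of true * FreeGroup.of false) ^ 3) ∧
    Nonempty
      ((Subgroup.closure
          {(PresentedGroup.of 0 : SapirLikeGroup) * PresentedGroup.of 1,
           (PresentedGroup.of 2 : SapirLikeGroup)} : Subgroup SapirLikeGroup) ≃* BS13) ∧
    ¬ IsWordHyperbolic SapirLikeGroup := by
  refine ⟨fun ψ ha hb => ?_, ⟨?_⟩, fun hG => ?_⟩
  · rw [map_mul, ha, hb]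
    simp only [pow_succ, pow_zero, one_mul, mul_assoc]
  · exact ((MonoidHom.ofInjective SapirLikeGroup.ofBS13_injective).trans
      (MulEquiv.subgroupCongr SapirLikeGroup.range_ofBS13)).symm
  · exact SapirLikeGroup.infinite_range_conjClassesMk_ab_pow
      (hG.finite_range_conjClassesMk_pow (by norm_num) SapirLikeGroup.t_inv_mul_ab_mul_t)
end
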